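/- arXiv:1407.2783 — 5 statements merged into one kernel-verified Lean document; each statement's English description precedes it below -/
import Mathlib

section
/- Let G₁ and G₂ be groups and let X be a bitransitive G₁-G₂-biset. Then for every x ∈ X the left stabilizer Stab_l(x) is a normal subgroup of G₁ and the right stabilizer Stab_r(x) is a normal subgroup of G₂. -/
/-- The left stabilizer of a point `x` in a set with a left `G₁`-action `l`,
as a subgroup of `G₁`. -/
def stabL {G₁ X : Type*} [Group G₁] (l : G₁ → X → X)
    (h1 : ∀ x, l 1 x = x) (hmul : ∀ g g' x, l (g * g') x = l g (l g' x))
    (x : X) : Subgroup G₁ where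
  carrier := {g | l g x = x}
  one_mem' := h1 x
  mul_mem' := by
    intro a b ha hb
    simp only [Set.mem_setOf_eq] at *
    rw [hmul, hb, ha]
  inv_mem' := by
    intro a ha
    simp only [Set.mem_setOf_eq] at *
    calc l a⁻¹ x = l a⁻¹ (l a x) := by rw [ha]
      _ = l (a⁻¹ * a) x := (hmul _ _ _).symm
      _ = x := by rw [inv_mul_cancel, h1]

/-- The right stabilizer of a point `x` in a set with a right `G₂`-action `r`,
as a subgroup of `G₂`. -/
def stabR {G₂ X : Type*} [Group G₂] (r : X → G₂ → X)
    (h1 : ∀ x, r x 1 = x) (hmul : ∀ x h h', r x (h * h') = r (r x h) h')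
    (x : X) : Subgroup G₂ where
  carrier := {h | r x h = x}
  one_mem' := h1 x
  mul_mem' := by
    intro a b ha hb
    simp only [Set.mem_setOf_eq] at *
    rw [hmul, ha, hb]
  inv_mem' := by
    intro a ha
    simp only [Set.mem_setOf_eq] at *
    calc r x a⁻¹ = r (r x a) a⁻¹ := by rw [ha]
      _ = r x (a * a⁻¹) := (hmul _ _ _).symm
      _ = x := by rw [mul_inv_cancel, h1]

/-! Commuting actions preserve each other's stabilizers, so a transitive right action makes the
left stabilizer the same subgroup at every point. Since conjugating `Stab_l(g⁻¹ • x)` by `g` lands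
in `Stab_l(x)`, that common subgroup is normal; the right side is symmetric. -/

section Left

variable {G₁ X β : Type*} [Group G₁] {l : G₁ → X → X}
  {hl1 : ∀ x, l 1 x = x} {hmul : ∀ g g' x, l (g * g') x = l g (l g' x)}

theorem stabL_le_stabL_of_commute (r : X → β → X) (hcompat : ∀ g x h, r (l g x) h = l g (r x h))
    (x : X) (h : β) : stabL l hl1 hmul x ≤ stabL l hl1 hmul (r x h) := by
  intro a (ha : l a x = x)
  show l a (r x h) = r x h
  rw [← hcompat, ha]

theorem conj_mem_stabL {x : X} {a g : G₁} (ha : a ∈ stabL l hl1 hmul (l g⁻¹ x)) :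
    g * a * g⁻¹ ∈ stabL l hl1 hmul x := by
  change l a (l g⁻¹ x) = l g⁻¹ x at ha
  show l (g * a * g⁻¹) x = x
  rw [hmul, hmul, ha, ← hmul, mul_inv_cancel, hl1]

theorem stabL_normal_of_commute_of_transitive (r : X → β → X)
    (hcompat : ∀ g x h, r (l g x) h = l g (r x h)) (htrans : ∀ x y : X, ∃ h : β, r x h = y)
    (x : X) : (stabL l hl1 hmul x).Normal where
  conj_mem a ha g := by
    obtain ⟨h, hh⟩ := htrans x (l g⁻¹ x)
    exact conj_mem_stabL (hh ▸ stabL_le_stabL_of_commute r hcompat x h ha)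

end Left

section Right

variable {G₂ X α : Type*} [Group G₂] {r : X → G₂ → X}
  {hr1 : ∀ x, r x 1 = x} {hmul : ∀ x h h', r x (h * h') = r (r x h) h'}

theorem stabR_le_stabR_of_commute (l : α → X → X) (hcompat : ∀ g x h, r (l g x) h = l g (r x h))
    (g : α) (x : X) : stabR r hr1 hmul x ≤ stabR r hr1 hmul (l g x) := by
  intro a (ha : r x a = x)
  show r (l g x) a = l g x
  rw [hcompat, ha]

theorem conj_mem_stabR {x : X} {a h : G₂} (ha : a ∈ stabR r hr1 hmul (r x h)) :
    h * a * h⁻¹ ∈ stabR r hr1 hmul x := by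
  change r (r x h) a = r x h at ha
  show r x (h * a * h⁻¹) = x
  rw [hmul, hmul, ha, ← hmul, mul_inv_cancel, hr1]

theorem stabR_normal_of_commute_of_transitive (l : α → X → X)
    (hcompat : ∀ g x h, r (l g x) h = l g (r x h)) (htrans : ∀ x y : X, ∃ g : α, l g x = y)
    (x : X) : (stabR r hr1 hmul x).Normal where
  conj_mem a ha h := by
    obtain ⟨g, hg⟩ := htrans x (r x h)
    exact conj_mem_stabR (hg ▸ stabR_le_stabR_of_commute l hcompat g x ha)

end Right

/-- If `X` is a bitransitive `G₁`-`G₂`-biset, then for every `x ∈ X` the left stabilizer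
is a normal subgroup of `G₁` and the right stabilizer is a normal subgroup of `G₂`. -/
theorem bitransitive_biset_stabilizers_normal
    {G₁ G₂ X : Type*} [Group G₁] [Group G₂]
    (l : G₁ → X → X) (r : X → G₂ → X)
    (hl1 : ∀ x, l 1 x = x) (hlmul : ∀ g g' x, l (g * g') x = l g (l g' x))
    (hr1 : ∀ x, r x 1 = x) (hrmul : ∀ x h h', r x (h * h') = r (r x h) h')
    (hcompat : ∀ g x h, r (l g x) h = l g (r x h))
    (hltrans : ∀ x y : X, ∃ g : G₁, l g x = y)
    (hrtrans : ∀ x y : X, ∃ h : G₂, r x h = y)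
    (x : X) :
    (stabL l hl1 hlmul x).Normal ∧ (stabR r hr1 hrmul x).Normal :=
  ⟨stabL_normal_of_commute_of_transitive r hcompat hrtrans x,
    stabR_normal_of_commute_of_transitive l hcompat hltrans x⟩
end

section
/- Let G₁ and G₂ be groups, X a bitransitive G₁-G₂-biset, and x ∈ X. For every g ∈ G₁ there exists h ∈ G₂ with g·x = x·h; the coset h·Stab_r(x) does not depend on the choice of such h; the resulting map G₁ → G₂/Stab_r(x), g ↦ h·Stab_r(x), is a surjective group homomorphism with kernel Stab_l(x); consequently it induces a group isomorphism G₁/Stab_l(x) ≅ G₂/Stab_r(x). -/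
/-!
Right transitivity gives, for each `g`, some `h` with `g·x = x·h`; since `x·h = x·h'` iff
`h h'⁻¹ ∈ Stab_r(x)`, the class of `h` in `G₂ ⧸ Stab_r(x)` depends only on `g`. Compatibility
of the two actions gives `(g g')·x = g·(x·h') = (x·h)·h'`, so `g ↦ [h]` is a homomorphism.
Left transitivity makes it surjective, and `[h] = 1` iff `g·x = x·1 = x`, so its kernel is
`Stab_l(x)`; the first isomorphism theorem concludes.
-/

section Biset

variable {G₁ G₂ X : Type*} [Group G₁] [Group G₂] {l : G₁ → X → X} {r : X → G₂ → X}

theorem act_mul_eq_act_mul (hlmul : ∀ g g' x, l (g * g') x = l g (l g' x))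
    (hrmul : ∀ x h h', r x (h * h') = r (r x h) h')
    (hcompat : ∀ g x h, r (l g x) h = l g (r x h)) {x : X} {g g' : G₁} {h h' : G₂}
    (e : l g x = r x h) (e' : l g' x = r x h') : l (g * g') x = r x (h * h') := by
  rw [hlmul, e', ← hcompat, e, ← hrmul]

variable (hl1 : ∀ x, l 1 x = x) (hlmul : ∀ g g' x, l (g * g') x = l g (l g' x))
  {hr1 : ∀ x, r x 1 = x} {hrmul : ∀ x h h', r x (h * h') = r (r x h) h'} {x : X}

theorem mem_stabL_iff {g : G₁} : g ∈ stabL l hl1 hlmul x ↔ l g x = x := Iff.rfl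

theorem mem_stabR_iff {h : G₂} : h ∈ stabR r hr1 hrmul x ↔ r x h = x := Iff.rfl

theorem mk_stabR_eq_mk_of_eq [(stabR r hr1 hrmul x).Normal] {h h' : G₂}
    (e : r x h = r x h') : (h : G₂ ⧸ stabR r hr1 hrmul x) = h' := by
  rw [QuotientGroup.eq_iff_div_mem, div_eq_mul_inv, mem_stabR_iff, hrmul, e, ← hrmul,
    mul_inv_cancel, hr1]

noncomputable def bisetHom (hcompat : ∀ g x h, r (l g x) h = l g (r x h))
    (hx : ∀ g, ∃ h, l g x = r x h) [(stabR r hr1 hrmul x).Normal] :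
    G₁ →* G₂ ⧸ stabR r hr1 hrmul x where
  toFun g := (hx g).choose
  map_one' := by
    refine (mk_stabR_eq_mk_of_eq ?_).trans (QuotientGroup.mk_one _)
    rw [← (hx 1).choose_spec, hl1, hr1]
  map_mul' g g' := by
    refine (mk_stabR_eq_mk_of_eq ?_).trans (QuotientGroup.mk_mul _ _ _)
    rw [← (hx _).choose_spec]
    exact act_mul_eq_act_mul hlmul hrmul hcompat (hx g).choose_spec (hx g').choose_spec

variable (hcompat : ∀ g x h, r (l g x) h = l g (r x h)) (hx : ∀ g, ∃ h, l g x = r x h)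
  [(stabR r hr1 hrmul x).Normal]

theorem bisetHom_apply_of_eq {g : G₁} {h : G₂} (e : l g x = r x h) :
    bisetHom hl1 hlmul hcompat hx g = h :=
  mk_stabR_eq_mk_of_eq ((hx g).choose_spec.symm.trans e)

theorem bisetHom_surjective (hltrans : ∀ y, ∃ g, l g x = y) :
    Function.Surjective (bisetHom hl1 hlmul hcompat hx) := by
  intro q
  induction q using QuotientGroup.induction_on with
  | H h =>
    obtain ⟨g, hg⟩ := hltrans (r x h)
    exact ⟨g, bisetHom_apply_of_eq hl1 hlmul hcompat hx hg⟩

theorem ker_bisetHom : (bisetHom hl1 hlmul hcompat hx).ker = stabL l hl1 hlmul x := by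
  ext g
  obtain ⟨h, hg⟩ := hx g
  rw [MonoidHom.mem_ker, bisetHom_apply_of_eq hl1 hlmul hcompat hx hg,
    QuotientGroup.eq_one_iff, mem_stabR_iff, mem_stabL_iff, hg]

end Biset

/-- For a bitransitive `G₁`-`G₂`-biset `X` and `x ∈ X`: every `g ∈ G₁` satisfies
`g·x = x·h` for some `h ∈ G₂`; the coset `h·Stab_r(x)` does not depend on the choice of `h`;
the resulting map `G₁ → G₂ ⧸ Stab_r(x)` is a surjective group homomorphism with kernel
`Stab_l(x)`; consequently it induces a group isomorphism
`G₁ ⧸ Stab_l(x) ≃* G₂ ⧸ Stab_r(x)`. -/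
theorem bitransitive_biset_induced_isomorphism
    {G₁ G₂ X : Type*} [Group G₁] [Group G₂]
    (l : G₁ → X → X) (r : X → G₂ → X)
    (hl1 : ∀ x, l 1 x = x) (hlmul : ∀ g g' x, l (g * g') x = l g (l g' x))
    (hr1 : ∀ x, r x 1 = x) (hrmul : ∀ x h h', r x (h * h') = r (r x h) h')
    (hcompat : ∀ g x h, r (l g x) h = l g (r x h))
    (hltrans : ∀ x y : X, ∃ g : G₁, l g x = y)
    (hrtrans : ∀ x y : X, ∃ h : G₂, r x h = y)
    (x : X)
    [(stabL l hl1 hlmul x).Normal] [(stabR r hr1 hrmul x).Normal] :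
    (∀ g : G₁, ∃ h : G₂, l g x = r x h) ∧
    ∃ φ : G₁ →* G₂ ⧸ stabR r hr1 hrmul x,
      (∀ (g : G₁) (h : G₂), l g x = r x h → φ g = QuotientGroup.mk h) ∧
      Function.Surjective φ ∧
      φ.ker = stabL l hl1 hlmul x ∧
      Nonempty ((G₁ ⧸ stabL l hl1 hlmul x) ≃* (G₂ ⧸ stabR r hr1 hrmul x)) := by
  have hx : ∀ g : G₁, ∃ h : G₂, l g x = r x h := fun g =>
    (hrtrans x (l g x)).imp fun _ => Eq.symm
  have hsurj := bisetHom_surjective hl1 hlmul hcompat hx (hltrans x)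
  have hker := ker_bisetHom hl1 hlmul hcompat hx
  exact ⟨hx, bisetHom hl1 hlmul hcompat hx, fun _ _ => bisetHom_apply_of_eq hl1 hlmul hcompat hx,
    hsurj, hker, ⟨(QuotientGroup.quotientMulEquivOfEq hker.symm).trans
      (QuotientGroup.quotientKerEquivOfSurjective _ hsurj)⟩⟩
end

section
/- Let G₁ be a group, G₂ a finite group, and X a G₁-G₂-biset whose right G₂-action is transitive. Fix x ∈ X and set H = Stab_r(x). Then: (i) every n ∈ G₂ for which there exists g ∈ G₁ with g·x = x·n lies in the normalizer N_{G₂}(H); (ii) there is a unique group homomorphism π : G₁ → N_{G₂}(H)/H such that for all g ∈ G₁ and all n ∈ N_{G₂}(H), π(g) = nH implies g·x = x·n; (iii) the kernel of π equals Stab_l(x). -/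
section RightAction

variable {G₂ X : Type*} [Group G₂] (r : X → G₂ → X)

theorem right_act_inv_eq_iff (hr1 : ∀ x, r x 1 = x)
    (hrmul : ∀ x h h', r x (h * h') = r (r x h) h') {a b : X} {n : G₂} :
    r a n⁻¹ = b ↔ a = r b n := by
  constructor
  · rintro rfl
    rw [← hrmul, inv_mul_cancel, hr1]
  · rintro rfl
    rw [← hrmul, mul_inv_cancel, hr1]

variable (hr1 : ∀ x, r x 1 = x) (hrmul : ∀ x h h', r x (h * h') = r (r x h) h')

abbrev stabRNormalizer (x : X) : Subgroup G₂ :=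
  Subgroup.normalizer (stabR r hr1 hrmul x : Set G₂)

abbrev stabRWeylGroup (x : X) : Type _ :=
  stabRNormalizer r hr1 hrmul x ⧸ (stabR r hr1 hrmul x).subgroupOf (stabRNormalizer r hr1 hrmul x)

theorem mem_stabR_right_act_iff (y : X) (n h : G₂) :
    h ∈ stabR r hr1 hrmul (r y n) ↔ n * h * n⁻¹ ∈ stabR r hr1 hrmul y := by
  change r (r y n) h = r y n ↔ r y (n * h * n⁻¹) = y
  rw [← right_act_inv_eq_iff r hr1 hrmul, hrmul, hrmul]

theorem stabR_right_act_of_mem_normalizer {x : X} {n : G₂}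
    (hn : n ∈ stabRNormalizer r hr1 hrmul x) :
    stabR r hr1 hrmul (r x n) = stabR r hr1 hrmul x := by
  ext h
  rw [mem_stabR_right_act_iff]
  exact (Subgroup.mem_normalizer_iff.mp hn h).symm

theorem right_act_eq_iff (y : X) (n m : G₂) :
    r y n = r y m ↔ n⁻¹ * m ∈ stabR r hr1 hrmul (r y n) := by
  change _ ↔ r (r y n) (n⁻¹ * m) = r y n
  rw [← hrmul, mul_inv_cancel_left, eq_comm]

theorem stabRWeylGroup_mk_eq_iff {x : X} (n m : stabRNormalizer r hr1 hrmul x) :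
    (QuotientGroup.mk n : stabRWeylGroup r hr1 hrmul x) = QuotientGroup.mk m ↔
      r x n = r x m := by
  rw [QuotientGroup.eq, Subgroup.mem_subgroupOf, right_act_eq_iff r hr1 hrmul,
    stabR_right_act_of_mem_normalizer r hr1 hrmul n.2]
  rfl

end RightAction

section Biset

variable {G₁ G₂ X : Type*} [Group G₁] [Group G₂] (l : G₁ → X → X) (r : X → G₂ → X)

theorem left_act_injective (hl1 : ∀ x, l 1 x = x) (hlmul : ∀ g g' x, l (g * g') x = l g (l g' x))
    (g : G₁) : Function.Injective (l g) :=
  Function.LeftInverse.injective (g := l g⁻¹) fun y => by rw [← hlmul, inv_mul_cancel, hl1]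

theorem left_act_mul_eq_right_act_mul (hlmul : ∀ g g' x, l (g * g') x = l g (l g' x))
    (hrmul : ∀ x h h', r x (h * h') = r (r x h) h') (hcompat : ∀ g x h, r (l g x) h = l g (r x h))
    {x : X} {g g' : G₁} {n n' : G₂} (hgn : l g x = r x n) (hgn' : l g' x = r x n') :
    l (g * g') x = r x (n * n') := by
  rw [hlmul, hgn', ← hcompat, hgn, hrmul]

variable (hr1 : ∀ x, r x 1 = x) (hrmul : ∀ x h h', r x (h * h') = r (r x h) h')

theorem stabR_left_act (hl1 : ∀ x, l 1 x = x) (hlmul : ∀ g g' x, l (g * g') x = l g (l g' x))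
    (hcompat : ∀ g x h, r (l g x) h = l g (r x h)) (g : G₁) (y : X) :
    stabR r hr1 hrmul (l g y) = stabR r hr1 hrmul y := by
  ext h
  change r (l g y) h = l g y ↔ r y h = y
  rw [hcompat]
  exact (left_act_injective l hl1 hlmul g).eq_iff

theorem mem_stabRNormalizer_of_left_act_eq (hl1 : ∀ x, l 1 x = x)
    (hlmul : ∀ g g' x, l (g * g') x = l g (l g' x)) (hcompat : ∀ g x h, r (l g x) h = l g (r x h))
    {x : X} {g : G₁} {n : G₂} (hgn : l g x = r x n) : n ∈ stabRNormalizer r hr1 hrmul x :=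
  Subgroup.mem_normalizer_iff.mpr fun h => by
    rw [← mem_stabR_right_act_iff, ← hgn, stabR_left_act l r hr1 hrmul hl1 hlmul hcompat]

theorem exists_stabRWeylGroup_hom (hl1 : ∀ x, l 1 x = x)
    (hlmul : ∀ g g' x, l (g * g') x = l g (l g' x))
    (hcompat : ∀ g x h, r (l g x) h = l g (r x h)) (x : X)
    (horbit : ∀ g : G₁, ∃ n : G₂, l g x = r x n) :
    ∃ π : G₁ →* stabRWeylGroup r hr1 hrmul x,
      ∀ (g : G₁) (n : stabRNormalizer r hr1 hrmul x),
        π g = QuotientGroup.mk n → l g x = r x (n : G₂) := by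
  choose rep hrep using horbit
  let rep' (g : G₁) : stabRNormalizer r hr1 hrmul x :=
    ⟨rep g, mem_stabRNormalizer_of_left_act_eq l r hr1 hrmul hl1 hlmul hcompat (hrep g)⟩
  have hmk (g : G₁) (n : stabRNormalizer r hr1 hrmul x) :
      (QuotientGroup.mk (rep' g) : stabRWeylGroup r hr1 hrmul x) = QuotientGroup.mk n ↔
        l g x = r x n := by
    rw [stabRWeylGroup_mk_eq_iff, ← hrep]
  refine ⟨MonoidHom.mk' (fun g => QuotientGroup.mk (rep' g)) fun a b => ?_,
    fun g n => (hmk g n).mp⟩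
  rw [← QuotientGroup.mk_mul, hmk]
  exact left_act_mul_eq_right_act_mul l r hlmul hrmul hcompat (hrep a) (hrep b)

section Spec

variable {l} (hl1 : ∀ x, l 1 x = x) (hlmul : ∀ g g' x, l (g * g') x = l g (l g' x)) {x : X}
  {π : G₁ →* stabRWeylGroup r hr1 hrmul x}

theorem stabRWeylGroup_hom_apply_eq_mk_iff
    (hπ : ∀ (g : G₁) (n : stabRNormalizer r hr1 hrmul x),
      π g = QuotientGroup.mk n → l g x = r x (n : G₂))
    (g : G₁) (n : stabRNormalizer r hr1 hrmul x) :
    π g = QuotientGroup.mk n ↔ l g x = r x n := by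
  obtain ⟨m, hm⟩ := QuotientGroup.mk_surjective (π g)
  rw [← hm, stabRWeylGroup_mk_eq_iff, ← hπ g m hm.symm]

theorem stabRWeylGroup_hom_unique {π' : G₁ →* stabRWeylGroup r hr1 hrmul x}
    (hπ : ∀ (g : G₁) (n : stabRNormalizer r hr1 hrmul x),
      π g = QuotientGroup.mk n → l g x = r x (n : G₂))
    (hπ' : ∀ (g : G₁) (n : stabRNormalizer r hr1 hrmul x),
      π' g = QuotientGroup.mk n → l g x = r x (n : G₂)) :
    π = π' := by
  ext g
  obtain ⟨m, hm⟩ := QuotientGroup.mk_surjective (π g)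
  rw [← hm, eq_comm, stabRWeylGroup_hom_apply_eq_mk_iff r hr1 hrmul hπ']
  exact hπ g m hm.symm

theorem stabRWeylGroup_hom_ker_eq_stabL
    (hπ : ∀ (g : G₁) (n : stabRNormalizer r hr1 hrmul x),
      π g = QuotientGroup.mk n → l g x = r x (n : G₂)) :
    π.ker = stabL l hl1 hlmul x := by
  ext g
  rw [MonoidHom.mem_ker, ← QuotientGroup.mk_one, stabRWeylGroup_hom_apply_eq_mk_iff r hr1 hrmul hπ,
    OneMemClass.coe_one, hr1]
  rfl

end Spec

end Biset

theorem biset_normalizer_homomorphism_general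
    {G₁ G₂ X : Type*} [Group G₁] [Group G₂]
    (l : G₁ → X → X) (r : X → G₂ → X)
    (hl1 : ∀ x, l 1 x = x) (hlmul : ∀ g g' x, l (g * g') x = l g (l g' x))
    (hr1 : ∀ x, r x 1 = x) (hrmul : ∀ x h h', r x (h * h') = r (r x h) h')
    (hcompat : ∀ g x h, r (l g x) h = l g (r x h))
    (hrtrans : ∀ x y : X, ∃ h : G₂, r x h = y)
    (x : X) :
    (∀ n : G₂, (∃ g : G₁, l g x = r x n) → n ∈ Subgroup.normalizer (stabR r hr1 hrmul x : Set G₂)) ∧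
    (∃! π : G₁ →* Subgroup.normalizer (stabR r hr1 hrmul x : Set G₂) ⧸
        (stabR r hr1 hrmul x).subgroupOf (Subgroup.normalizer (stabR r hr1 hrmul x : Set G₂)),
      ∀ (g : G₁) (n : Subgroup.normalizer (stabR r hr1 hrmul x : Set G₂)),
        π g = QuotientGroup.mk n → l g x = r x (n : G₂)) ∧
    (∀ π : G₁ →* Subgroup.normalizer (stabR r hr1 hrmul x : Set G₂) ⧸
        (stabR r hr1 hrmul x).subgroupOf (Subgroup.normalizer (stabR r hr1 hrmul x : Set G₂)),
      (∀ (g : G₁) (n : Subgroup.normalizer (stabR r hr1 hrmul x : Set G₂)),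
        π g = QuotientGroup.mk n → l g x = r x (n : G₂)) →
      π.ker = stabL l hl1 hlmul x) := by
  have horbit (g : G₁) : ∃ n : G₂, l g x = r x n := (hrtrans x (l g x)).imp fun _ => Eq.symm
  obtain ⟨π, hπ⟩ := exists_stabRWeylGroup_hom l r hr1 hrmul hl1 hlmul hcompat x horbit
  refine ⟨fun n ⟨g, hgn⟩ => ?_, ⟨π, hπ, fun π' hπ' => ?_⟩, fun π' hπ' => ?_⟩
  · exact mem_stabRNormalizer_of_left_act_eq l r hr1 hrmul hl1 hlmul hcompat hgn
  · exact stabRWeylGroup_hom_unique r hr1 hrmul hπ' hπ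
  · exact stabRWeylGroup_hom_ker_eq_stabL r hr1 hrmul hl1 hlmul hπ'

/-- Let `G₁` be a group, `G₂` a finite group, and `X` a `G₁`-`G₂`-biset whose right
`G₂`-action is transitive. Fix `x ∈ X` and set `H = Stab_r(x)`. Then (i) every `n ∈ G₂`
with `g·x = x·n` for some `g ∈ G₁` lies in the normalizer `N_{G₂}(H)`; (ii) there is a
unique group homomorphism `π : G₁ → N_{G₂}(H)/H` such that `π(g) = nH` implies
`g·x = x·n`; and (iii) the kernel of `π` equals `Stab_l(x)`. -/
theorem biset_normalizer_homomorphism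
    {G₁ G₂ X : Type*} [Group G₁] [Group G₂] [Finite G₂]
    (l : G₁ → X → X) (r : X → G₂ → X)
    (hl1 : ∀ x, l 1 x = x) (hlmul : ∀ g g' x, l (g * g') x = l g (l g' x))
    (hr1 : ∀ x, r x 1 = x) (hrmul : ∀ x h h', r x (h * h') = r (r x h) h')
    (hcompat : ∀ g x h, r (l g x) h = l g (r x h))
    (hrtrans : ∀ x y : X, ∃ h : G₂, r x h = y)
    (x : X) :
    (∀ n : G₂, (∃ g : G₁, l g x = r x n) → n ∈ Subgroup.normalizer (stabR r hr1 hrmul x : Set G₂)) ∧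
    (∃! π : G₁ →* Subgroup.normalizer (stabR r hr1 hrmul x : Set G₂) ⧸
        (stabR r hr1 hrmul x).subgroupOf (Subgroup.normalizer (stabR r hr1 hrmul x : Set G₂)),
      ∀ (g : G₁) (n : Subgroup.normalizer (stabR r hr1 hrmul x : Set G₂)),
        π g = QuotientGroup.mk n → l g x = r x (n : G₂)) ∧
    (∀ π : G₁ →* Subgroup.normalizer (stabR r hr1 hrmul x : Set G₂) ⧸
        (stabR r hr1 hrmul x).subgroupOf (Subgroup.normalizer (stabR r hr1 hrmul x : Set G₂)),
      (∀ (g : G₁) (n : Subgroup.normalizer (stabR r hr1 hrmul x : Set G₂)),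
        π g = QuotientGroup.mk n → l g x = r x (n : G₂)) →
      π.ker = stabL l hl1 hlmul x) :=
  biset_normalizer_homomorphism_general l r hl1 hlmul hr1 hrmul hcompat hrtrans x
end

section
/- Let G₁, G₂ be groups, k a field, X a G₁-G₂-biset, and (μ_l, μ_r, μ_m) a bimodule datum on X. Then for every x ∈ X the map μ_m(−,x,−) : Stab_l(x) × Stab_r(x) → kˣ is bimultiplicative: for all n₁, n₁′ ∈ Stab_l(x) and n₂, n₂′ ∈ Stab_r(x) one has μ_m(n₁n₁′, x, n₂) = μ_m(n₁, x, n₂)·μ_m(n₁′, x, n₂) and μ_m(n₁, x, n₂n₂′) = μ_m(n₁, x, n₂)·μ_m(n₁, x, n₂′). In particular, n₁ ↦ μ_m(n₁, x, −) is a group homomorphism from Stab_l(x) to Hom(Stab_r(x), kˣ). -/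
/-! At a point fixed by the group elements involved, the factor `μ_l σ τ x` (resp. `μ_r x ρ φ`)
occurs on both sides of the compatibility equation, and cancelling it in the commutative
group `kˣ` leaves multiplicativity of `μ_m`. -/

section BimoduleDatum

variable {G₁ G₂ X M : Type*} [CancelCommMonoid M] (l : G₁ → X → X) (r : X → G₂ → X)

theorem bimoduleDatum_mul_left_of_fixed [Mul G₁] (μl : G₁ → G₁ → X → M) (μm : G₁ → X → G₂ → M)
    (heq2 : ∀ (σ τ : G₁) (x : X) (φ : G₂),
      μm (σ * τ) x φ * μl σ τ (r x φ) = μl σ τ x * μm σ (l τ x) φ * μm τ x φ)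
    {x : X} (σ : G₁) {τ : G₁} (hτ : l τ x = x) {φ : G₂} (hφ : r x φ = x) :
    μm (σ * τ) x φ = μm σ x φ * μm τ x φ := by
  have h := heq2 σ τ x φ
  rw [hφ, hτ, mul_assoc, mul_comm] at h
  exact mul_left_cancel h

theorem bimoduleDatum_mul_right_of_fixed [Mul G₂] (μr : X → G₂ → G₂ → M) (μm : G₁ → X → G₂ → M)
    (heq1 : ∀ (σ : G₁) (x : X) (ρ φ : G₂),
      μr (l σ x) ρ φ * μm σ x (ρ * φ) = μm σ x ρ * μm σ (r x ρ) φ * μr x ρ φ)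
    {x : X} {σ : G₁} (hσ : l σ x = x) {ρ : G₂} (hρ : r x ρ = x) (φ : G₂) :
    μm σ x (ρ * φ) = μm σ x ρ * μm σ x φ := by
  have h := heq1 σ x ρ φ
  rw [hσ, hρ, mul_comm] at h
  exact mul_right_cancel h

end BimoduleDatum

theorem bimodule_datum_pairing_bimultiplicative_general
    {G₁ G₂ X k : Type*} [Group G₁] [Group G₂] [Field k]
    (l : G₁ → X → X) (r : X → G₂ → X)
    (μl : G₁ → G₁ → X → kˣ) (μr : X → G₂ → G₂ → kˣ) (μm : G₁ → X → G₂ → kˣ)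
    (heq1 : ∀ (σ : G₁) (x : X) (ρ φ : G₂),
      μr (l σ x) ρ φ * μm σ x (ρ * φ) = μm σ x ρ * μm σ (r x ρ) φ * μr x ρ φ)
    (heq2 : ∀ (σ τ : G₁) (x : X) (φ : G₂),
      μm (σ * τ) x φ * μl σ τ (r x φ) = μl σ τ x * μm σ (l τ x) φ * μm τ x φ)
    (x : X) :
    ∀ n₁ n₁' : G₁, l n₁ x = x → l n₁' x = x →
    ∀ n₂ n₂' : G₂, r x n₂ = x → r x n₂' = x →
      μm (n₁ * n₁') x n₂ = μm n₁ x n₂ * μm n₁' x n₂ ∧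
      μm n₁ x (n₂ * n₂') = μm n₁ x n₂ * μm n₁ x n₂' :=
  fun n₁ _ h₁ h₁' _ n₂' h₂ _ =>
    ⟨bimoduleDatum_mul_left_of_fixed l r μl μm heq2 n₁ h₁' h₂,
      bimoduleDatum_mul_right_of_fixed l r μr μm heq1 h₁ h₂ n₂'⟩

/-- For a bimodule datum `(μ_l, μ_r, μ_m)` on a `G₁`-`G₂`-biset `X`, the map
`μ_m(−,x,−)` is bimultiplicative on `Stab_l(x) × Stab_r(x)` for every `x ∈ X`. -/
theorem bimodule_datum_pairing_bimultiplicative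
    {G₁ G₂ X k : Type*} [Group G₁] [Group G₂] [Field k]
    (l : G₁ → X → X) (r : X → G₂ → X)
    (hl1 : ∀ x, l 1 x = x) (hlmul : ∀ g g' x, l (g * g') x = l g (l g' x))
    (hr1 : ∀ x, r x 1 = x) (hrmul : ∀ x h h', r x (h * h') = r (r x h) h')
    (hcompat : ∀ g x h, r (l g x) h = l g (r x h))
    (μl : G₁ → G₁ → X → kˣ) (μr : X → G₂ → G₂ → kˣ) (μm : G₁ → X → G₂ → kˣ)
    (heq1 : ∀ (σ : G₁) (x : X) (ρ φ : G₂),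
      μr (l σ x) ρ φ * μm σ x (ρ * φ) = μm σ x ρ * μm σ (r x ρ) φ * μr x ρ φ)
    (heq2 : ∀ (σ τ : G₁) (x : X) (φ : G₂),
      μm (σ * τ) x φ * μl σ τ (r x φ) = μl σ τ x * μm σ (l τ x) φ * μm τ x φ)
    (x : X) :
    ∀ n₁ n₁' : G₁, l n₁ x = x → l n₁' x = x →
    ∀ n₂ n₂' : G₂, r x n₂ = x → r x n₂' = x →
      μm (n₁ * n₁') x n₂ = μm n₁ x n₂ * μm n₁' x n₂ ∧
      μm n₁ x (n₂ * n₂') = μm n₁ x n₂ * μm n₁ x n₂' :=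
  bimodule_datum_pairing_bimultiplicative_general l r μl μr μm heq1 heq2 x
end

section
/- Let G₁, G₂ be finite groups with |G₁| = |G₂|, k an algebraically closed field of characteristic zero, X a bitransitive G₁-G₂-biset, (μ_l, μ_r, μ_m) a bimodule datum on X, and x ∈ X such that the pairing μ_m(−,x,−) : Stab_l(x) × Stab_r(x) → kˣ is non-degenerate. Then Stab_l(x) is a normal abelian subgroup of G₁, Stab_r(x) is a normal abelian subgroup of G₂, and there is a group isomorphism Stab_l(x) ≅ Stab_r(x). -/
/-!
An element fixing `x` on one side fixes every translate of `x` from the other side, so by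
transitivity the stabilizers are normal. On the stabilizers the two cocycle identities of the
bimodule datum say that `μ_m(−, x, −)` is bimultiplicative, so non-degeneracy embeds
`Stab_l(x)` into `Hom(Stab_r(x), kˣ)` and `Stab_r(x)` into `Hom(Stab_l(x), kˣ)`. Both
stabilizers are then abelian, and over an algebraically closed field of characteristic zero a
finite abelian group is isomorphic to its character group; comparing cardinalities, the first
embedding is an isomorphism `Stab_l(x) ≃ Hom(Stab_r(x), kˣ) ≃ Stab_r(x)`.
-/

section Pairing

variable {A C : Type*}

theorem mul_comm_of_injective {N : Type*} [MulOneClass A] [CommMonoid N] (f : A →* N)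
    (hf : Function.Injective f) (a b : A) : a * b = b * a :=
  hf (by rw [map_mul, map_mul, mul_comm])

theorem MonoidHom.injective_of_exists_apply_ne_one {M : Type*} [Group A] [MulOneClass C]
    [CommGroup M] (B : A →* C →* M) (h : ∀ a : A, a ≠ 1 → ∃ c, B a c ≠ 1) :
    Function.Injective B := by
  refine (injective_iff_map_eq_one B).2 fun a ha => ?_
  by_contra hne
  obtain ⟨c, hc⟩ := h a hne
  exact hc (DFunLike.congr_fun ha c)

theorem hasEnoughRootsOfUnity_exponent (k G : Type*) [Field k] [IsSepClosed k] [CharZero k]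
    [LeftCancelMonoid G] [Finite G] : HasEnoughRootsOfUnity k (Monoid.exponent G) :=
  have : NeZero (Monoid.exponent G : k) :=
    ⟨Nat.cast_ne_zero.2 Monoid.exponent_ne_zero_of_finite⟩
  inferInstance

theorem nonempty_mulEquiv_of_injective_pairing {M : Type*} [Group A] [Group C] [Finite A]
    [Finite C] [CommMonoid M] [HasEnoughRootsOfUnity M (Monoid.exponent A)]
    [HasEnoughRootsOfUnity M (Monoid.exponent C)] (B : A →* C →* Mˣ)
    (hB : Function.Injective B) (hB' : Function.Injective B.flip) : Nonempty (A ≃* C) := by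
  let _ : CommGroup A := { mul_comm := mul_comm_of_injective B hB }
  let _ : CommGroup C := { mul_comm := mul_comm_of_injective B.flip hB' }
  obtain ⟨e⟩ := CommGroup.monoidHom_mulEquiv_of_hasEnoughRootsOfUnity C M
  have hcardC := CommGroup.card_monoidHom_of_hasEnoughRootsOfUnity C M
  have hcardA := CommGroup.card_monoidHom_of_hasEnoughRootsOfUnity A M
  have : Finite (C →* Mˣ) := Finite.of_equiv _ e.symm.toEquiv
  have : Finite (A →* Mˣ) := Nat.finite_of_card_ne_zero (hcardA ▸ Nat.card_pos.ne')
  have hle : Nat.card A ≤ Nat.card C := hcardC ▸ Nat.card_le_card_of_injective B hB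
  have hge : Nat.card C ≤ Nat.card A := hcardA ▸ Nat.card_le_card_of_injective _ hB'
  have hbij : Function.Bijective B :=
    (Nat.bijective_iff_injective_and_card B).2 ⟨hB, by omega⟩
  exact ⟨(MulEquiv.ofBijective B hbij).trans e⟩

end Pairing

section BimoduleDatum

variable {G₁ G₂ X M : Type*} {l : G₁ → X → X} {r : X → G₂ → X}
  {μl : G₁ → G₁ → X → M} {μr : X → G₂ → G₂ → M} {μm : G₁ → X → G₂ → M}

theorem stabL_normal [Group G₁] (hl1 : ∀ x, l 1 x = x)
    (hlmul : ∀ g g' x, l (g * g') x = l g (l g' x))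
    (hcompat : ∀ g x h, r (l g x) h = l g (r x h)) {x : X} (hrtrans : ∀ y, ∃ h, r x h = y) :
    (stabL l hl1 hlmul x).Normal := by
  refine ⟨fun n (hn : l n x = x) g => show l (g * n * g⁻¹) x = x from ?_⟩
  obtain ⟨h, hh⟩ := hrtrans (l g⁻¹ x)
  have hfix : l n (l g⁻¹ x) = l g⁻¹ x := by rw [← hh, ← hcompat, hn]
  rw [hlmul, hlmul, hfix, ← hlmul, mul_inv_cancel, hl1]

theorem stabR_normal [Group G₂] (hr1 : ∀ x, r x 1 = x)
    (hrmul : ∀ x h h', r x (h * h') = r (r x h) h')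
    (hcompat : ∀ g x h, r (l g x) h = l g (r x h)) {x : X} (hltrans : ∀ y, ∃ g, l g x = y) :
    (stabR r hr1 hrmul x).Normal := by
  refine ⟨fun m (hm : r x m = x) h => show r x (h * m * h⁻¹) = x from ?_⟩
  obtain ⟨g, hg⟩ := hltrans (r x h)
  have hfix : r (r x h) m = r x h := by rw [← hg, hcompat, hm]
  rw [hrmul, hrmul, hfix, ← hrmul, mul_inv_cancel, hr1]

theorem μm_mul_left [Mul G₁] [CancelCommMonoid M]
    (heq2 : ∀ (σ τ : G₁) (x : X) (φ : G₂),
      μm (σ * τ) x φ * μl σ τ (r x φ) = μl σ τ x * μm σ (l τ x) φ * μm τ x φ)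
    {x : X} (σ : G₁) {τ : G₁} {φ : G₂} (hτ : l τ x = x) (hφ : r x φ = x) :
    μm (σ * τ) x φ = μm σ x φ * μm τ x φ := by
  have h := heq2 σ τ x φ
  rw [hφ, hτ] at h
  exact mul_right_cancel (h.trans (by ac_rfl))

theorem μm_mul_right [Mul G₂] [CancelCommMonoid M]
    (heq1 : ∀ (σ : G₁) (x : X) (ρ φ : G₂),
      μr (l σ x) ρ φ * μm σ x (ρ * φ) = μm σ x ρ * μm σ (r x ρ) φ * μr x ρ φ)
    {x : X} {σ : G₁} {ρ : G₂} (φ : G₂) (hσ : l σ x = x) (hρ : r x ρ = x) :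
    μm σ x (ρ * φ) = μm σ x ρ * μm σ x φ := by
  have h := heq1 σ x ρ φ
  rw [hσ, hρ] at h
  exact mul_left_cancel (h.trans (mul_comm _ _))

def stabPairing [Group G₁] [Group G₂] [CommGroup M] (hl1 : ∀ x, l 1 x = x)
    (hlmul : ∀ g g' x, l (g * g') x = l g (l g' x)) (hr1 : ∀ x, r x 1 = x)
    (hrmul : ∀ x h h', r x (h * h') = r (r x h) h')
    (heq1 : ∀ (σ : G₁) (x : X) (ρ φ : G₂),
      μr (l σ x) ρ φ * μm σ x (ρ * φ) = μm σ x ρ * μm σ (r x ρ) φ * μr x ρ φ)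
    (heq2 : ∀ (σ τ : G₁) (x : X) (φ : G₂),
      μm (σ * τ) x φ * μl σ τ (r x φ) = μl σ τ x * μm σ (l τ x) φ * μm τ x φ)
    (x : X) : stabL l hl1 hlmul x →* stabR r hr1 hrmul x →* M :=
  MonoidHom.mk'
    (fun n => MonoidHom.mk' (fun m => μm n x m) fun m _ => μm_mul_right heq1 _ n.2 m.2)
    fun _ b => MonoidHom.ext fun m => μm_mul_left heq2 _ b.2 m.2

end BimoduleDatum

theorem nondegenerate_pairing_stabilizers_general
    {G₁ G₂ X k : Type*} [Group G₁] [Group G₂] [Finite G₁] [Finite G₂]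
    [Field k] [IsAlgClosed k] [CharZero k]
    (l : G₁ → X → X) (r : X → G₂ → X)
    (hl1 : ∀ x, l 1 x = x) (hlmul : ∀ g g' x, l (g * g') x = l g (l g' x))
    (hr1 : ∀ x, r x 1 = x) (hrmul : ∀ x h h', r x (h * h') = r (r x h) h')
    (hcompat : ∀ g x h, r (l g x) h = l g (r x h))
    (hltrans : ∀ x y : X, ∃ g : G₁, l g x = y)
    (hrtrans : ∀ x y : X, ∃ h : G₂, r x h = y)
    (μl : G₁ → G₁ → X → kˣ) (μr : X → G₂ → G₂ → kˣ) (μm : G₁ → X → G₂ → kˣ)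
    (heq1 : ∀ (σ : G₁) (x : X) (ρ φ : G₂),
      μr (l σ x) ρ φ * μm σ x (ρ * φ) = μm σ x ρ * μm σ (r x ρ) φ * μr x ρ φ)
    (heq2 : ∀ (σ τ : G₁) (x : X) (φ : G₂),
      μm (σ * τ) x φ * μl σ τ (r x φ) = μl σ τ x * μm σ (l τ x) φ * μm τ x φ)
    (x : X)
    (hnd₁ : ∀ n₁ : ↥(stabL l hl1 hlmul x), (n₁ : G₁) ≠ 1 →
        ∃ n₂ : ↥(stabR r hr1 hrmul x), μm (n₁ : G₁) x (n₂ : G₂) ≠ 1)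
    (hnd₂ : ∀ n₂ : ↥(stabR r hr1 hrmul x), (n₂ : G₂) ≠ 1 →
        ∃ n₁ : ↥(stabL l hl1 hlmul x), μm (n₁ : G₁) x (n₂ : G₂) ≠ 1) :
    (stabL l hl1 hlmul x).Normal ∧
    (∀ a b : ↥(stabL l hl1 hlmul x), a * b = b * a) ∧
    (stabR r hr1 hrmul x).Normal ∧
    (∀ a b : ↥(stabR r hr1 hrmul x), a * b = b * a) ∧
    Nonempty (↥(stabL l hl1 hlmul x) ≃* ↥(stabR r hr1 hrmul x)) := by
  set B := stabPairing hl1 hlmul hr1 hrmul heq1 heq2 x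
  have hB : Function.Injective B :=
    B.injective_of_exists_apply_ne_one fun n hn => hnd₁ n (by exact_mod_cast hn)
  have hB' : Function.Injective B.flip :=
    B.flip.injective_of_exists_apply_ne_one fun m hm => hnd₂ m (by exact_mod_cast hm)
  have := hasEnoughRootsOfUnity_exponent k (stabL l hl1 hlmul x)
  have := hasEnoughRootsOfUnity_exponent k (stabR r hr1 hrmul x)
  exact ⟨stabL_normal hl1 hlmul hcompat (hrtrans x), mul_comm_of_injective B hB,
    stabR_normal hr1 hrmul hcompat (hltrans x), mul_comm_of_injective B.flip hB',
    nonempty_mulEquiv_of_injective_pairing B hB hB'⟩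

/-- Let `G₁`, `G₂` be finite groups of the same order, `k` an algebraically closed field of
characteristic zero, `X` a bitransitive `G₁`-`G₂`-biset, `(μ_l, μ_r, μ_m)` a bimodule datum
on `X`, and `x ∈ X` such that the pairing `μ_m(−,x,−)` is non-degenerate. Then `Stab_l(x)`
is a normal abelian subgroup of `G₁`, `Stab_r(x)` is a normal abelian subgroup of `G₂`, and
`Stab_l(x) ≅ Stab_r(x)` as groups. -/
theorem nondegenerate_pairing_stabilizers
    {G₁ G₂ X k : Type*} [Group G₁] [Group G₂] [Finite G₁] [Finite G₂]
    [Field k] [IsAlgClosed k] [CharZero k]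
    (hcard : Nat.card G₁ = Nat.card G₂)
    (l : G₁ → X → X) (r : X → G₂ → X)
    (hl1 : ∀ x, l 1 x = x) (hlmul : ∀ g g' x, l (g * g') x = l g (l g' x))
    (hr1 : ∀ x, r x 1 = x) (hrmul : ∀ x h h', r x (h * h') = r (r x h) h')
    (hcompat : ∀ g x h, r (l g x) h = l g (r x h))
    (hltrans : ∀ x y : X, ∃ g : G₁, l g x = y)
    (hrtrans : ∀ x y : X, ∃ h : G₂, r x h = y)
    (μl : G₁ → G₁ → X → kˣ) (μr : X → G₂ → G₂ → kˣ) (μm : G₁ → X → G₂ → kˣ)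
    (heq1 : ∀ (σ : G₁) (x : X) (ρ φ : G₂),
      μr (l σ x) ρ φ * μm σ x (ρ * φ) = μm σ x ρ * μm σ (r x ρ) φ * μr x ρ φ)
    (heq2 : ∀ (σ τ : G₁) (x : X) (φ : G₂),
      μm (σ * τ) x φ * μl σ τ (r x φ) = μl σ τ x * μm σ (l τ x) φ * μm τ x φ)
    (x : X)
    (hnd₁ : ∀ n₁ : ↥(stabL l hl1 hlmul x), (n₁ : G₁) ≠ 1 →
        ∃ n₂ : ↥(stabR r hr1 hrmul x), μm (n₁ : G₁) x (n₂ : G₂) ≠ 1)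
    (hnd₂ : ∀ n₂ : ↥(stabR r hr1 hrmul x), (n₂ : G₂) ≠ 1 →
        ∃ n₁ : ↥(stabL l hl1 hlmul x), μm (n₁ : G₁) x (n₂ : G₂) ≠ 1) :
    (stabL l hl1 hlmul x).Normal ∧
    (∀ a b : ↥(stabL l hl1 hlmul x), a * b = b * a) ∧
    (stabR r hr1 hrmul x).Normal ∧
    (∀ a b : ↥(stabR r hr1 hrmul x), a * b = b * a) ∧
    Nonempty (↥(stabL l hl1 hlmul x) ≃* ↥(stabR r hr1 hrmul x)) :=
  nondegenerate_pairing_stabilizers_general l r hl1 hlmul hr1 hrmul hcompat hltrans hrtrans μl μr μm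
    heq1 heq2 x hnd₁ hnd₂
end
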